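/- arXiv:1008.3719 — 6 statements merged into one kernel-verified Lean document; each statement's English description precedes it below -/
import Mathlib

section
/- Let D be a finite-dimensional ℚ-division algebra whose centre is the number field K, and let R be a maximal order in D. Then the centre of R is the ring of integers of K; that is, an element x of D lies in the centre of R if and only if x lies in the centre of D and x is integral over ℤ. -/
/-- An order in a finite-dimensional `ℚ`-algebra `D`: a subring whose additive group is
finitely generated and which spans `D` over `ℚ`. -/
def IsOrder {D : Type*} [Ring D] [Algebra ℚ D] (R : Subring D) : Prop :=
  R.toAddSubgroup.FG ∧ Submodule.span ℚ (R : Set D) = ⊤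

/-!
Elements of an order are integral over `ℤ`, and an element of `R` that commutes with `R`
commutes with its `ℚ`-span `D`. Conversely, if `x` is central in `D` and integral over `ℤ`,
then `ℤ[x]` commutes with `R`, so the additive group `R · ℤ[x]` is a ring; it is finitely
generated as a product of finitely generated groups, hence an order containing `R` and `x`,
and maximality of `R` forces `x ∈ R`.
-/

namespace Subalgebra

variable {R A : Type*} [CommSemiring R] [Semiring A] [Algebra R A]

theorem mul_toSubmodule_of_commute (S T : Subalgebra R A)
    (hST : ∀ s ∈ S, ∀ t ∈ T, Commute s t) :
    toSubmodule S * toSubmodule T = toSubmodule (S ⊔ T) := by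
  set P := toSubmodule S * toSubmodule T
  have hPP : P * P = P := by
    have hTS : toSubmodule T * toSubmodule S = P :=
      Submodule.mul_comm_of_commute fun t ht s hs => (hST s hs t ht).symm
    calc P * P = toSubmodule S * (toSubmodule T * toSubmodule S) * toSubmodule T := by
          simp only [P, mul_assoc]
      _ = (toSubmodule S * toSubmodule S) * (toSubmodule T * toSubmodule T) := by
          simp only [hTS, P, mul_assoc]
      _ = P := by rw [(isIdempotentElem_toSubmodule S).eq, (isIdempotentElem_toSubmodule T).eq]
  have hSP : toSubmodule S ≤ P := le_mul_of_one_le_right' (Submodule.one_le.mpr (one_mem T))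
  have hTP : toSubmodule T ≤ P := le_mul_of_one_le_left' (Submodule.one_le.mpr (one_mem S))
  let U := P.toSubalgebra (hSP (one_mem S)) fun _ _ hx hy => hPP.le (Submodule.mul_mem_mul hx hy)
  have hSTU : S ⊔ T ≤ U := sup_le (fun _ hs => hSP hs) (fun _ ht => hTP ht)
  exact le_antisymm (mul_toSubmodule_le S T) fun _ ha => hSTU ha

end Subalgebra

theorem mem_center_of_commute_of_span_eq_top {k A : Type*} [CommSemiring k] [Semiring A]
    [Algebra k A] {s : Set A} (hs : Submodule.span k s = ⊤) {x : A}
    (hx : ∀ y ∈ s, Commute x y) : x ∈ Subalgebra.center k A := by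
  have hle : Submodule.span k s ≤ Subalgebra.toSubmodule (Subalgebra.centralizer k {x}) :=
    Submodule.span_le.mpr fun y hy => by
      rw [SetLike.mem_coe, Subalgebra.mem_toSubmodule, Subalgebra.mem_centralizer_iff]
      rintro _ rfl
      exact hx y hy
  rw [hs] at hle
  exact Subalgebra.mem_center_iff.mpr fun g =>
    ((Subalgebra.mem_centralizer_iff k).mp (hle Submodule.mem_top) x rfl).symm

namespace IsOrder

variable {D : Type*} [Ring D] [Algebra ℚ D] {R : Subring D}

theorem isIntegral (hR : IsOrder R) {x : D} (hx : x ∈ R) : IsIntegral ℤ x :=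
  IsIntegral.of_mem_of_fg (subalgebraOfSubring R)
    ((Submodule.fg_iff_addSubgroup_fg _).mpr hR.1) x hx

theorem exists_le_of_mem_center_of_isIntegral (hR : IsOrder R) {x : D}
    (hxc : x ∈ Subring.center D) (hxint : IsIntegral ℤ x) :
    ∃ S : Subring D, IsOrder S ∧ R ≤ S ∧ x ∈ S := by
  set Zx := Algebra.adjoin ℤ ({x} : Set D)
  have hZx : Zx ≤ Subalgebra.center ℤ D :=
    Algebra.adjoin_le (Set.singleton_subset_iff.mpr (Subalgebra.mem_center_iff.mpr
      (Subring.mem_center_iff.mp hxc)))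
  have hcomm : ∀ r ∈ subalgebraOfSubring R, ∀ a ∈ Zx, Commute r a := fun r _ _ ha =>
    Subalgebra.mem_center_iff.mp (hZx ha) r
  set S := subalgebraOfSubring R ⊔ Zx
  have hRS : R ≤ S.toSubring := fun r hr => Algebra.mem_sup_left (mem_subalgebraOfSubring.mpr hr)
  have hfg : (Subalgebra.toSubmodule S).FG := by
    rw [← Subalgebra.mul_toSubmodule_of_commute _ _ hcomm]
    exact ((Submodule.fg_iff_addSubgroup_fg _).mpr hR.1).mul hxint.fg_adjoin_singleton
  refine ⟨S.toSubring, ⟨(Submodule.fg_iff_addSubgroup_fg _).mp hfg, ?_⟩, hRS,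
    Algebra.mem_sup_right (Algebra.self_mem_adjoin_singleton ℤ x)⟩
  exact eq_top_iff.mpr (hR.2 ▸ Submodule.span_mono hRS)

end IsOrder

theorem stmt_1_general {D : Type*} [DivisionRing D] [Algebra ℚ D]
    (R : Subring D) (hR : IsOrder R)
    (hmax : ∀ S : Subring D, IsOrder S → R ≤ S → S = R) (x : D) :
    (x ∈ R ∧ ∀ y ∈ R, x * y = y * x) ↔
      x ∈ Subring.center D ∧ IsIntegral ℤ x := by
  constructor
  · rintro ⟨hxR, hcomm⟩
    exact ⟨mem_center_of_commute_of_span_eq_top hR.2 hcomm, hR.isIntegral hxR⟩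
  · rintro ⟨hxc, hxint⟩
    obtain ⟨S, hS, hRS, hxS⟩ := hR.exists_le_of_mem_center_of_isIntegral hxc hxint
    rw [hmax S hS hRS] at hxS
    exact ⟨hxS, fun y _ => (Subring.mem_center_iff.mp hxc y).symm⟩

/-- Let `D` be a finite-dimensional `ℚ`-division algebra and let `R` be a
maximal order in `D`. Then the centre of `R` is the ring of integers of the centre `K` of `D`:
an element `x ∈ D` lies in the centre of `R` iff it lies in the centre of `D` and is
integral over `ℤ`. -/
theorem stmt_1 {D : Type*} [DivisionRing D] [Algebra ℚ D] [FiniteDimensional ℚ D]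
    (R : Subring D) (hR : IsOrder R)
    (hmax : ∀ S : Subring D, IsOrder S → R ≤ S → S = R) (x : D) :
    (x ∈ R ∧ ∀ y ∈ R, x * y = y * x) ↔
      x ∈ Subring.center D ∧ IsIntegral ℤ x :=
  stmt_1_general R hR hmax x
end

section
/- Let D be a finite-dimensional ℚ-division algebra and let R be an order in D. Then every finitely generated torsion-free left R-module admits an injective R-linear map into a finitely generated free left R-module R^r for some r ≥ 0. -/
open Function Submodule LinearMap

theorem AddSubgroup.exists_zsmul_forall_mem {G ι : Type*} [AddCommGroup G] [Fintype ι]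
    {N : AddSubgroup G} (hN : ∀ g, ∃ z : ℤ, z ≠ 0 ∧ z • g ∈ N) (v : ι → G) :
    ∃ z : ℤ, z ≠ 0 ∧ ∀ i, z • v i ∈ N := by
  choose z hz0 hz using hN
  refine ⟨∏ i, z (v i), Finset.prod_ne_zero_iff.2 fun i _ ↦ hz0 _, fun i ↦ ?_⟩
  obtain ⟨k, hk⟩ := Finset.dvd_prod_of_mem (fun i ↦ z (v i)) (Finset.mem_univ i)
  rw [hk, mul_comm, mul_smul]
  exact N.zsmul_mem (hz _) k

theorem Subring.exists_zsmul_mem_of_mem_span {S W : Type*} [Ring S] [AddCommGroup W]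
    [Module S W] {R : Subring S} (hR : ∀ s : S, ∃ z : ℤ, z ≠ 0 ∧ z • s ∈ R) {N : AddSubgroup W}
    (hN : ∀ r ∈ R, ∀ w ∈ N, r • w ∈ N) {y : W} (hy : y ∈ span S (N : Set W)) :
    ∃ z : ℤ, z ≠ 0 ∧ z • y ∈ N := by
  induction hy using span_induction with
  | mem w hw => exact ⟨1, one_ne_zero, by simpa using hw⟩
  | zero => exact ⟨1, one_ne_zero, by simp⟩
  | add w w' _ _ hw hw' =>
    obtain ⟨z, hz, hzw⟩ := hw
    obtain ⟨z', hz', hzw'⟩ := hw'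
    refine ⟨z * z', mul_ne_zero hz hz', ?_⟩
    rw [smul_add, mul_smul, mul_smul, smul_comm z z' w]
    exact N.add_mem (N.zsmul_mem hzw z') (N.zsmul_mem hzw' z)
  | smul s w _ hw =>
    obtain ⟨z, hz, hzs⟩ := hR s
    obtain ⟨z', hz', hzw⟩ := hw
    refine ⟨z * z', mul_ne_zero hz hz', ?_⟩
    rw [mul_smul, ← smul_comm s z' w, ← smul_assoc]
    exact hN _ hzs _ hzw

theorem AddSubgroup.exists_zsmul_mem_of_mem_span_rat {V : Type*} [AddCommGroup V] [Module ℚ V]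
    (A : AddSubgroup V) {v : V} (hv : v ∈ span ℚ (A : Set V)) : ∃ z : ℤ, z ≠ 0 ∧ z • v ∈ A := by
  refine Subring.exists_zsmul_mem_of_mem_span (R := ⊥) (fun q ↦ ⟨q.den, ?_, ?_⟩) ?_ hv
  · exact_mod_cast q.den_ne_zero
  · exact Subring.mem_bot.2 ⟨q.num, by rw [zsmul_eq_mul, Int.cast_natCast, Rat.den_mul_eq_num]⟩
  · rintro _ hr a ha
    obtain ⟨n, rfl⟩ := Subring.mem_bot.1 hr
    rw [Int.cast_smul_eq_zsmul]
    exact A.zsmul_mem ha n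

section Subring

variable {S : Type*} [Ring S] {R : Subring S}

variable (R) in
def Subring.piInclusion (ι : Type*) : (ι → R) →ₗ[R] (ι → S) :=
  LinearMap.compLeft (LinearMap.toSpanSingleton R S 1) ι

@[simp]
theorem Subring.piInclusion_apply (ι : Type*) (x : ι → R) (i : ι) :
    R.piInclusion ι x i = x i := by
  simp [piInclusion, Subring.smul_def]

theorem Subring.piInclusion_injective (ι : Type*) : Injective (R.piInclusion ι) :=
  fun x y h ↦ funext fun i ↦ Subtype.ext (by simpa using congrFun h i)

variable {M : Type*} [AddCommGroup M] [Module R M]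

theorem Subring.piInclusion_mem_span_map_ker_iff (hR : ∀ s : S, ∃ z : ℤ, z ≠ 0 ∧ z • s ∈ R)
    [IsAddTorsionFree M] {ι : Type*} (π : (ι → R) →ₗ[R] M) (x : ι → R) :
    R.piInclusion ι x ∈ span S ((ker π).map (R.piInclusion ι) : Set (ι → S)) ↔ π x = 0 := by
  refine ⟨fun hx ↦ ?_, fun hx ↦ subset_span ⟨x, hx, rfl⟩⟩
  obtain ⟨z, hz, κ, hκ, hzx⟩ := Subring.exists_zsmul_mem_of_mem_span hR
    (N := ((ker π).map (R.piInclusion ι)).toAddSubgroup)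
    (fun r hr w hw ↦ ((ker π).map (R.piInclusion ι)).smul_mem ⟨r, hr⟩ hw) hx
  rw [← map_zsmul] at hzx
  rw [Subring.piInclusion_injective ι hzx, SetLike.mem_coe, mem_ker, map_zsmul] at hκ
  exact zsmul_right_injective hz (hκ.trans (smul_zero z).symm)

theorem Subring.exists_injective_linearMap_pi_of_injective [IsAddTorsionFree S]
    (hR : ∀ s : S, ∃ z : ℤ, z ≠ 0 ∧ z • s ∈ R) [Module.Finite R M] {ι : Type*} [Fintype ι]
    (φ : M →ₗ[R] (ι → S)) (hφ : Injective φ) : ∃ f : M →ₗ[R] (ι → R), Injective f := by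
  obtain ⟨s, hs⟩ := Module.Finite.fg_top (R := R) (M := M)
  obtain ⟨z, hz, hzφ⟩ := AddSubgroup.exists_zsmul_forall_mem (N := R.toAddSubgroup) hR
    fun p : s × ι ↦ φ p.1 p.2
  have hrange : ∀ m, (z • φ) m ∈ range (R.piInclusion ι) := by
    suffices ⊤ ≤ (range (R.piInclusion ι)).comap (z • φ) from fun m ↦ this trivial
    rw [← hs, span_le]
    exact fun m hm ↦ ⟨fun i ↦ ⟨_, hzφ (⟨m, hm⟩, i)⟩, funext fun i ↦ by simp⟩
  refine ⟨(LinearEquiv.ofInjective _ (R.piInclusion_injective ι)).symm.toLinearMap ∘ₗ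
    (z • φ).codRestrict _ hrange, ?_⟩
  rw [LinearMap.coe_comp, LinearEquiv.coe_coe]
  exact (LinearEquiv.injective _).comp fun a b h ↦
    hφ (zsmul_right_injective hz (congrArg Subtype.val h))

end Subring

theorem Subring.exists_injective_linearMap_pi_of_isAddTorsionFree {D : Type*} [DivisionRing D]
    {R : Subring D} (hR : ∀ d : D, ∃ z : ℤ, z ≠ 0 ∧ z • d ∈ R)
    (M : Type*) [AddCommGroup M] [Module R M] [Module.Finite R M] [IsAddTorsionFree M] :
    ∃ (n : ℕ) (φ : M →ₗ[R] (Fin n → D)), Injective φ := by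
  obtain ⟨k, π, hπ⟩ := Module.Finite.exists_fin' R M
  let P : Submodule D (Fin k → D) := span D ((ker π).map (R.piInclusion (Fin k)))
  let g : (Fin k → R) →ₗ[R] (Fin k → D) ⧸ P := P.mkQ.restrictScalars R ∘ₗ R.piInclusion (Fin k)
  have hker : ker π = ker g := by
    ext x
    rw [mem_ker, mem_ker, ← R.piInclusion_mem_span_map_ker_iff hR π x]
    exact (Submodule.Quotient.mk_eq_zero P).symm
  let e := (Module.finBasis D ((Fin k → D) ⧸ P)).equivFun.restrictScalars R
  refine ⟨_, e.toLinearMap ∘ₗ (ker π).liftQ g hker.le ∘ₗ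
    (π.quotKerEquivOfSurjective hπ).symm.toLinearMap, ?_⟩
  rw [LinearMap.coe_comp, LinearMap.coe_comp, LinearEquiv.coe_coe, LinearEquiv.coe_coe]
  exact e.injective.comp <| (ker_eq_bot.1 (ker_liftQ_eq_bot' _ _ hker)).comp
    (LinearEquiv.injective _)

theorem stmt_2_general {D : Type*} [DivisionRing D] [Algebra ℚ D]
    (R : Subring D) (hR : IsOrder R)
    (M : Type*) [AddCommGroup M] [Module R M] [Module.Finite R M]
    (htf : ∀ (α : R) (m : M), α ≠ 0 → m ≠ 0 → α • m ≠ 0) :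
    ∃ (r : ℕ) (f : M →ₗ[R] (Fin r → R)), Function.Injective f := by
  have hden (d : D) : ∃ z : ℤ, z ≠ 0 ∧ z • d ∈ R :=
    R.toAddSubgroup.exists_zsmul_mem_of_mem_span_rat (hR.2 ▸ mem_top)
  have : CharZero D := algebraRat.charZero D
  have : Module.IsTorsionFree R M := .of_smul_eq_zero fun α m h ↦ by
    contrapose! h
    exact htf α m h.1 h.2
  have : IsAddTorsionFree M := .of_isTorsionFree R M
  obtain ⟨n, φ, hφ⟩ := R.exists_injective_linearMap_pi_of_isAddTorsionFree hden M
  obtain ⟨f, hf⟩ := R.exists_injective_linearMap_pi_of_injective hden φ hφ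
  exact ⟨n, f, hf⟩

/-- Let `D` be a finite-dimensional `ℚ`-division algebra and let `R` be an
order in `D`. Then every finitely generated torsion-free left `R`-module admits an injective
`R`-linear map into a finitely generated free left `R`-module `R^r` for some `r ≥ 0`. -/
theorem stmt_2 {D : Type*} [DivisionRing D] [Algebra ℚ D] [FiniteDimensional ℚ D]
    (R : Subring D) (hR : IsOrder R)
    (M : Type*) [AddCommGroup M] [Module R M] [Module.Finite R M]
    (htf : ∀ (α : R) (m : M), α ≠ 0 → m ≠ 0 → α • m ≠ 0) :
    ∃ (r : ℕ) (f : M →ₗ[R] (Fin r → R)), Function.Injective f :=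
  stmt_2_general R hR M htf
end

section
/- Let ζ₇ ∈ ℂ be a primitive seventh root of unity, τ := ζ₇ + ζ₇⁻¹, and R := ℤ[2τ, 2τ²]. Then the ideal 𝔪 := (2, 2τ, 2τ²) of R is a maximal ideal, and the quotient ring R/𝔪 is a field with exactly two elements (isomorphic to 𝔽₂). -/
/-! `R` is generated over `ℤ` by elements of `𝔪`, so every class of `R ⧸ 𝔪` is represented by
an integer, and `2 ∈ 𝔪` makes `R ⧸ 𝔪` a quotient of `𝔽₂`. It is not zero: `τ` is an algebraic
integer, so every element of `𝔪 = 2R + 2τR + 2τ²R` is twice an algebraic integer, while `1/2` is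
not one. -/

theorem not_isIntegral_int_inv_two (K : Type*) [Field K] [CharZero K] :
    ¬ IsIntegral ℤ (2⁻¹ : K) := by
  intro h
  have hℚ : IsIntegral ℤ (2⁻¹ : ℚ) := by
    rwa [← isIntegral_algHom_iff (algebraMap ℚ K).toIntAlgHom (algebraMap ℚ K).injective,
      RingHom.toIntAlgHom_apply, map_inv₀, map_ofNat]
  obtain ⟨n, hn⟩ := IsIntegrallyClosed.isIntegral_iff.mp hℚ
  rw [algebraMap_int_eq, eq_intCast] at hn
  have h2n : 2 * n = 1 := by exact_mod_cast (show (2 * n : ℚ) = 1 by rw [hn]; norm_num)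
  omega

theorem one_notMem_span_of_isIntegral_half {K : Type*} [Field K] [CharZero K]
    {R : Subalgebra ℤ K} (hR : R ≤ integralClosure ℤ K) {s : Set R}
    (hs : ∀ x ∈ s, IsIntegral ℤ ((x : K) / 2)) : (1 : R) ∉ Ideal.span s := by
  intro h1
  have half_integral : ∀ x ∈ Ideal.span s, IsIntegral ℤ ((x : K) / 2) := by
    intro x hx
    induction hx using Submodule.span_induction with
    | mem x hx => exact hs x hx
    | zero => simpa using isIntegral_zero
    | add x y _ _ hx hy => simpa only [Subalgebra.coe_add, add_div] using hx.add hy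
    | smul c x _ hx =>
      simpa only [smul_eq_mul, Subalgebra.coe_mul, mul_div_assoc] using (hR c.2).mul hx
  exact not_isIntegral_int_inv_two K (by simpa using half_integral 1 h1)

theorem Ideal.Quotient.algebraMap_surjective_of_adjoin_eq_top {S R : Type*} [CommRing S]
    [CommRing R] [Algebra S R] {s : Set R} (hs : Algebra.adjoin S s = ⊤) {I : Ideal R}
    (hsI : s ⊆ I) : Function.Surjective (algebraMap S (R ⧸ I)) := by
  have hle : Algebra.adjoin S s ≤ (⊥ : Subalgebra S (R ⧸ I)).comap (Ideal.Quotient.mkₐ S I) :=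
    Algebra.adjoin_le fun x hx => by
      rw [SetLike.mem_coe, Subalgebra.mem_comap, Ideal.Quotient.mkₐ_eq_mk,
        Ideal.Quotient.eq_zero_iff_mem.mpr (hsI hx)]
      exact zero_mem _
  intro y
  obtain ⟨x, rfl⟩ := Ideal.Quotient.mk_surjective y
  exact Algebra.mem_bot.mp (hle (hs ▸ Algebra.mem_top))

noncomputable def ZMod.ringEquivOfIntCastSurjective {A : Type*} [Ring A] (n : ℕ) [CharP A n]
    (h : Function.Surjective (Int.castRingHom A)) : ZMod n ≃+* A :=
  RingEquiv.ofBijective (ZMod.castHom (dvd_refl n) A)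
    ⟨ZMod.castHom_injective A, fun y => by obtain ⟨k, rfl⟩ := h y; exact ⟨k, by simp⟩⟩

noncomputable def Ideal.quotientEquivZModTwoOfAdjoinEqTop {R : Type*} [CommRing R] {s : Set R}
    (hs : Algebra.adjoin ℤ s = ⊤) {I : Ideal R} (hsI : s ⊆ I) (h2 : 2 ∈ I) (h1 : 1 ∉ I) :
    R ⧸ I ≃+* ZMod 2 :=
  have : Nontrivial (R ⧸ I) := Ideal.Quotient.nontrivial_iff.mpr ((Ideal.ne_top_iff_one I).mpr h1)
  have : CharP (R ⧸ I) 2 := (CharP.charP_iff_prime_eq_zero Nat.prime_two).mpr <| by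
    rwa [Nat.cast_ofNat, ← map_ofNat (Ideal.Quotient.mk I) 2, Ideal.Quotient.eq_zero_iff_mem]
  (ZMod.ringEquivOfIntCastSurjective 2 <| algebraMap_int_eq (R ⧸ I) ▸
    Ideal.Quotient.algebraMap_surjective_of_adjoin_eq_top hs hsI).symm

/-- Let `ζ₇ ∈ ℂ` be a primitive seventh root of unity,
`τ := ζ₇ + ζ₇⁻¹` and `R := ℤ[2τ, 2τ²]`. Then the ideal `𝔪 := (2, 2τ, 2τ²)` of `R` is
maximal and `R/𝔪` is a field with exactly two elements (isomorphic to `𝔽₂`). -/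
theorem stmt_8 (ζ : ℂ) (hζ : IsPrimitiveRoot ζ 7)
    (R : Subalgebra ℤ ℂ)
    (hR : R = Algebra.adjoin ℤ {2 * (ζ + ζ⁻¹), 2 * (ζ + ζ⁻¹) ^ 2})
    (a b : R) (ha : (a : ℂ) = 2 * (ζ + ζ⁻¹)) (hb : (b : ℂ) = 2 * (ζ + ζ⁻¹) ^ 2)
    (𝔪 : Ideal R) (h𝔪 : 𝔪 = Ideal.span {2, a, b}) :
    𝔪.IsMaximal ∧ Nonempty ((R ⧸ 𝔪) ≃+* ZMod 2) := by
  subst h𝔪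
  have hτ : IsIntegral ℤ (ζ + ζ⁻¹) :=
    (hζ.isIntegral (by norm_num)).add (hζ.inv.isIntegral (by norm_num))
  have hR_integral : R ≤ integralClosure ℤ ℂ := by
    rw [hR]
    refine Algebra.adjoin_le ?_
    rintro x (rfl | rfl)
    · exact (isIntegral_natCast 2).mul hτ
    · exact (isIntegral_natCast 2).mul (hτ.pow 2)
  have hab : Algebra.adjoin ℤ {a, b} = ⊤ := by
    subst hR
    convert Algebra.adjoin_adjoin_coe_preimage using 2
    ext x
    simp [Subtype.ext_iff, ha, hb]
  have hone : 1 ∉ Ideal.span {2, a, b} := by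
    refine one_notMem_span_of_isIntegral_half hR_integral ?_
    rintro x (rfl | rfl | rfl)
    · rw [show ((2 : R) : ℂ) = 2 by norm_cast, div_self two_ne_zero]
      exact isIntegral_one
    · simpa [ha] using hτ
    · simpa [hb] using hτ.pow 2
  let e := Ideal.quotientEquivZModTwoOfAdjoinEqTop hab
    ((Set.subset_insert 2 _).trans Ideal.subset_span)
    (Ideal.subset_span (by simp)) hone
  exact ⟨Ideal.Quotient.maximal_of_isField _ (e.toMulEquiv.isField (Field.toIsField _)), ⟨e⟩⟩
end

section
/- Let ζ₇ ∈ ℂ be a primitive seventh root of unity, τ := ζ₇ + ζ₇⁻¹, and R := ℤ[2τ, 2τ²]. For every odd integer c, the element c·(2τ²) is not contained in the ideal of R generated by 2 and 2τ. -/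
/-!
Since `τ³ = 1 + 2τ - τ²`, the ring `ℤ[2τ, 2τ²]` is `ℤ + ℤ·2τ + ℤ·2τ²`. Multiplying such elements
by `2` or by `2τ` produces only `τ²`-coefficients divisible by `4`, whereas `c·2τ²` has
`τ²`-coefficient `2c ≢ 0 mod 4`. The `τ²`-coefficient is well defined because `1, τ, τ²` are
linearly independent over `ℚ`: a relation among them is a relation of degree `5 < φ(7)` in `ζ`.
-/

open Polynomial

namespace IsPrimitiveRoot

variable {K : Type*} [Field K] {ζ : K}

theorem eq_zero_of_aeval_eq_zero_of_degree_lt [CharZero K] {n : ℕ} (hζ : IsPrimitiveRoot ζ n)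
    (hn : 0 < n) {P : ℚ[X]} (hdeg : P.degree < n.totient) (hP : aeval ζ P = 0) : P = 0 := by
  by_contra hne
  have hmin := minpoly.degree_le_of_ne_zero ℚ ζ hne hP
  rw [← cyclotomic_eq_minpoly_rat hζ hn, degree_cyclotomic] at hmin
  exact hmin.not_gt hdeg

theorem seven_inv_eq_pow_six (hζ : IsPrimitiveRoot ζ 7) : ζ⁻¹ = ζ ^ 6 :=
  inv_eq_of_mul_eq_one_right (by rw [← pow_succ']; exact hζ.pow_eq_one)

theorem seven_geom_sum_eq_zero (hζ : IsPrimitiveRoot ζ 7) :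
    1 + ζ + ζ ^ 2 + ζ ^ 3 + ζ ^ 4 + ζ ^ 5 + ζ ^ 6 = 0 := by
  simpa [Finset.sum_range_succ] using hζ.geom_sum_eq_zero (by norm_num)

theorem seven_add_inv_cubic (hζ : IsPrimitiveRoot ζ 7) :
    (ζ + ζ⁻¹) ^ 3 + (ζ + ζ⁻¹) ^ 2 - 2 * (ζ + ζ⁻¹) - 1 = 0 := by
  rw [hζ.seven_inv_eq_pow_six]
  linear_combination hζ.seven_geom_sum_eq_zero
    + (ζ ^ 11 + 3 * ζ ^ 6 + ζ ^ 5 + ζ ^ 4 + 3 * ζ + 2) * hζ.pow_eq_one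

theorem seven_add_inv_coeffs_eq_zero [CharZero K] (hζ : IsPrimitiveRoot ζ 7) {p q r : ℚ}
    (h : (p : K) + q * (ζ + ζ⁻¹) + r * (ζ + ζ⁻¹) ^ 2 = 0) : p = 0 ∧ q = 0 ∧ r = 0 := by
  -- reduce to a polynomial of degree `5 < φ 7` in `ζ`, using `ζ⁻¹ = ζ⁶` and `ζ⁶ = -(1 + ⋯ + ζ⁵)`
  set P : ℚ[X] := C (p + 2 * r - q) + C (r - q) * X ^ 2 - C q * X ^ 3 - C q * X ^ 4
    + C (r - q) * X ^ 5 with hP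
  have hPζ : aeval ζ P = 0 := by
    simp only [hP, map_add, map_sub, map_mul, aeval_C, aeval_X, map_pow, eq_ratCast]
    rw [hζ.seven_inv_eq_pow_six] at h
    push_cast
    linear_combination h - (q : K) * hζ.seven_geom_sum_eq_zero
      - (2 * (r : K) + r * ζ ^ 5) * hζ.pow_eq_one
  have hP0 : P = 0 := hζ.eq_zero_of_aeval_eq_zero_of_degree_lt (by norm_num) (by
    rw [Nat.totient_prime (by norm_num : Nat.Prime 7), hP]
    refine (?_ : _ ≤ (5 : WithBot ℕ)).trans_lt (by norm_num)
    compute_degree) hPζ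
  have h0 := congrArg (coeff · 0) hP0
  have h2 := congrArg (coeff · 2) hP0
  have h3 := congrArg (coeff · 3) hP0
  simp only [hP, coeff_add, coeff_sub, coeff_C_mul, coeff_X_pow, coeff_C, coeff_zero] at h0 h2 h3
  norm_num at h0 h2 h3
  exact ⟨by linarith, h3, by linarith⟩

end IsPrimitiveRoot

section CubicOrder

variable {A : Type*} [CommRing A] {τ : A}

theorem exists_eq_of_mem_adjoin_two_mul (hτ : τ ^ 3 + τ ^ 2 - 2 * τ - 1 = 0) {z : A}
    (hz : z ∈ Algebra.adjoin ℤ {2 * τ, 2 * τ ^ 2}) :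
    ∃ m n k : ℤ, z = m + n * (2 * τ) + k * (2 * τ ^ 2) := by
  induction hz using Algebra.adjoin_induction with
  | mem x hx =>
    rcases hx with rfl | rfl
    · exact ⟨0, 1, 0, by simp⟩
    · exact ⟨0, 0, 1, by simp⟩
  | algebraMap m => exact ⟨m, 0, 0, by simp⟩
  | add x y _ _ ihx ihy =>
    obtain ⟨m, n, k, rfl⟩ := ihx
    obtain ⟨m', n', k', rfl⟩ := ihy
    exact ⟨m + m', n + n', k + k', by push_cast; ring⟩
  | mul x y _ _ ihx ihy =>
    obtain ⟨m, n, k, rfl⟩ := ihx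
    obtain ⟨m', n', k', rfl⟩ := ihy
    refine ⟨m * m' + 4 * (n * k' + k * n') - 4 * (k * k'),
      m * n' + n * m' + 4 * (n * k' + k * n') - 2 * (k * k'),
      m * k' + k * m' + 2 * (n * n') - 2 * (n * k' + k * n') + 6 * (k * k'), ?_⟩
    push_cast
    linear_combination (4 * ((n : A) * k' + k * n') + 4 * (k : A) * k' * (τ - 1)) * hτ

theorem exists_eq_of_mem_span_two_two_mul (hτ : τ ^ 3 + τ ^ 2 - 2 * τ - 1 = 0)
    {a : Algebra.adjoin ℤ {2 * τ, 2 * τ ^ 2}} (ha : (a : A) = 2 * τ)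
    {x : Algebra.adjoin ℤ {2 * τ, 2 * τ ^ 2}} (hx : x ∈ Ideal.span {2, a}) :
    ∃ p q k : ℤ, (x : A) = p + q * τ + 4 * k * τ ^ 2 := by
  obtain ⟨r, s, rfl⟩ := Ideal.mem_span_pair.mp hx
  obtain ⟨m, n, k, hr⟩ := exists_eq_of_mem_adjoin_two_mul hτ r.2
  obtain ⟨m', n', k', hs⟩ := exists_eq_of_mem_adjoin_two_mul hτ s.2
  refine ⟨2 * m + 4 * k', 4 * n + 2 * m' + 8 * k', k + n' - k', ?_⟩
  have h2 : ((2 : Algebra.adjoin ℤ {2 * τ, 2 * τ ^ 2}) : A) = 2 := rfl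
  push_cast [h2, ha, hr, hs]
  linear_combination 4 * (k' : A) * hτ

end CubicOrder

/-- Let `ζ₇ ∈ ℂ` be a primitive seventh root of unity,
`τ := ζ₇ + ζ₇⁻¹` and `R := ℤ[2τ, 2τ²]`. For every odd integer `c`, the element `c·(2τ²)`
is not contained in the ideal of `R` generated by `2` and `2τ`. -/
theorem stmt_10 (ζ : ℂ) (hζ : IsPrimitiveRoot ζ 7)
    (R : Subalgebra ℤ ℂ)
    (hR : R = Algebra.adjoin ℤ {2 * (ζ + ζ⁻¹), 2 * (ζ + ζ⁻¹) ^ 2})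
    (a b : R) (ha : (a : ℂ) = 2 * (ζ + ζ⁻¹)) (hb : (b : ℂ) = 2 * (ζ + ζ⁻¹) ^ 2) :
    ∀ c : ℤ, Odd c → (c : R) * b ∉ Ideal.span {(2 : R), a} := by
  subst hR
  intro c hc hmem
  obtain ⟨p, q, k, h⟩ := exists_eq_of_mem_span_two_two_mul hζ.seven_add_inv_cubic ha hmem
  have hrel :
      ((p : ℚ) : ℂ) + (q : ℚ) * (ζ + ζ⁻¹) + ((4 * k - 2 * c : ℤ) : ℚ) * (ζ + ζ⁻¹) ^ 2 = 0 := by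
    push_cast [hb] at h ⊢
    linear_combination -h
  obtain ⟨-, -, hcoeff⟩ := hζ.seven_add_inv_coeffs_eq_zero hrel
  have : 4 * k - 2 * c = 0 := by exact_mod_cast hcoeff
  obtain ⟨j, rfl⟩ := hc
  omega
end

section
/- Let M be the 6×6 rational matrix which is block diagonal with two copies of the 3×3 matrix with rows (0,0,1), (1,0,2), (0,1,−1), and let X be the 6×6 rational matrix which is block diagonal with two copies of the 3×3 matrix with rows (2,−1,2), (−1,2,−2), (2,−2,5). Then: (i) X·M = Mᵀ·X; (ii) the minimal polynomial of M over ℚ is x³ + x² − 2x − 1; (iii) the characteristic polynomial of X is (x−1)⁴(x−7)²; and (iv) X is positive definite. -/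
/-!
`M` and `X` consist of two diagonal copies of the `3 × 3` blocks `blockM` and `blockX`, and
`A ↦ diag(A, A)` is an injective algebra homomorphism commuting with transposition, so each
claim reduces to the blocks. `blockM` is the companion matrix of `x³ + x² − 2x − 1`, which has
no rational root and is therefore irreducible, so it is also the minimal polynomial. The
quadratic form of `blockX` is the sum of squares `(a − b + 2c)² + a² + b² + c²`.
-/

open Matrix

namespace Matrix

variable {R n m : Type*} [Fintype n] [DecidableEq n] [Fintype m] [DecidableEq m]

def fromBlocksDiagAlgHom [CommSemiring R] :
    Matrix n n R →ₐ[R] Matrix (n ⊕ n) (n ⊕ n) R where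
  toFun A := fromBlocks A 0 0 A
  map_one' := fromBlocks_one
  map_mul' A B := by simp [fromBlocks_multiply]
  map_zero' := fromBlocks_zero
  map_add' A B := by simp [fromBlocks_add]
  commutes' r := by simp [Algebra.algebraMap_eq_smul_one, ← fromBlocks_one, fromBlocks_smul]

def doubleBlockAlgHom [CommSemiring R] (e : n ⊕ n ≃ m) : Matrix n n R →ₐ[R] Matrix m m R :=
  (reindexAlgEquiv R R e).toAlgHom.comp fromBlocksDiagAlgHom

lemma doubleBlockAlgHom_apply [CommSemiring R] (e : n ⊕ n ≃ m) (A : Matrix n n R) :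
    doubleBlockAlgHom e A = reindex e e (fromBlocks A 0 0 A) := rfl

lemma doubleBlockAlgHom_injective [CommSemiring R] (e : n ⊕ n ≃ m) :
    Function.Injective (doubleBlockAlgHom (R := R) e) := by
  intro A B h
  rw [doubleBlockAlgHom_apply, doubleBlockAlgHom_apply, (reindex e e).apply_eq_iff_eq] at h
  exact (fromBlocks_inj.1 h).1

lemma transpose_doubleBlockAlgHom [CommSemiring R] (e : n ⊕ n ≃ m) (A : Matrix n n R) :
    (doubleBlockAlgHom e A)ᵀ = doubleBlockAlgHom e Aᵀ := by
  simp [doubleBlockAlgHom_apply, fromBlocks_transpose]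

lemma charpoly_doubleBlockAlgHom [CommRing R] (e : n ⊕ n ≃ m) (A : Matrix n n R) :
    (doubleBlockAlgHom e A).charpoly = A.charpoly ^ 2 := by
  rw [doubleBlockAlgHom_apply, charpoly_reindex, charpoly_fromBlocks_zero₁₂, sq]

lemma dotProduct_doubleBlockAlgHom_mulVec [CommSemiring R] (e : n ⊕ n ≃ m) (A : Matrix n n R)
    (v : m → R) :
    v ⬝ᵥ doubleBlockAlgHom e A *ᵥ v =
      (v ∘ e ∘ Sum.inl) ⬝ᵥ A *ᵥ (v ∘ e ∘ Sum.inl) +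
        (v ∘ e ∘ Sum.inr) ⬝ᵥ A *ᵥ (v ∘ e ∘ Sum.inr) := by
  rw [doubleBlockAlgHom_apply, reindex_apply, submatrix_mulVec_equiv, dotProduct_comp_equiv_symm,
    fromBlocks_mulVec]
  simp only [dotProduct, Fintype.sum_sum_type, Sum.elim_inl, Sum.elim_inr, zero_mulVec, add_zero,
    zero_add]
  rfl

lemma dotProduct_doubleBlockAlgHom_mulVec_pos [CommSemiring R] [PartialOrder R]
    [IsOrderedCancelAddMonoid R] (e : n ⊕ n ≃ m) {A : Matrix n n R}
    (hA : ∀ w, w ≠ 0 → 0 < w ⬝ᵥ A *ᵥ w) {v : m → R} (hv : v ≠ 0) :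
    0 < v ⬝ᵥ doubleBlockAlgHom e A *ᵥ v := by
  have hA' (w : n → R) : 0 ≤ w ⬝ᵥ A *ᵥ w := by
    rcases eq_or_ne w 0 with rfl | hw
    · simp
    · exact (hA w hw).le
  rw [dotProduct_doubleBlockAlgHom_mulVec]
  by_cases hl : v ∘ e ∘ Sum.inl = 0
  · refine add_pos_of_nonneg_of_pos (hA' _) (hA _ fun hr => hv ?_)
    funext i
    obtain ⟨j | j, rfl⟩ := e.surjective i
    exacts [congrFun hl j, congrFun hr j]
  · exact add_pos_of_pos_of_nonneg (hA _ hl) (hA' _)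

end Matrix

section Blocks

open Polynomial

lemma irreducible_X_pow_three_add_X_sq_sub_two_mul_X_sub_one :
    Irreducible (X ^ 3 + X ^ 2 - 2 * X - 1 : ℚ[X]) := by
  have hmonic : (X ^ 3 + X ^ 2 - 2 * X - 1 : ℤ[X]).Monic := by monicity!
  have hdeg : (X ^ 3 + X ^ 2 - 2 * X - 1 : ℚ[X]).natDegree = 3 := by compute_degree!
  rw [irreducible_iff_roots_eq_zero_of_degree_le_three (by omega) (by omega),
    Multiset.eq_zero_iff_forall_notMem]
  intro r hr
  rw [mem_roots (ne_zero_of_natDegree_gt (n := 0) (by omega))] at hr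
  obtain ⟨m, rfl, hdvd⟩ := exists_integer_of_is_root_of_monic hmonic (r := r) (by
    simpa [aeval_def, ← eval_map] using hr)
  obtain rfl | rfl := Int.isUnit_iff.mp (isUnit_of_dvd_one (by simpa using hdvd))
  all_goals norm_num [IsRoot] at hr

def blockM : Matrix (Fin 3) (Fin 3) ℚ := !![0, 0, 1; 1, 0, 2; 0, 1, -1]
def blockX : Matrix (Fin 3) (Fin 3) ℚ := !![2, -1, 2; -1, 2, -2; 2, -2, 5]

lemma blockX_mul_blockM : blockX * blockM = blockMᵀ * blockX := by
  ext i j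
  fin_cases i <;> fin_cases j <;> simp [blockX, blockM, mul_apply, Fin.sum_univ_three] <;> norm_num

lemma charpoly_blockM : blockM.charpoly = X ^ 3 + X ^ 2 - 2 * X - 1 := by
  rw [charpoly, det_fin_three]
  simp [blockM, map_ofNat]
  ring

lemma minpoly_blockM : minpoly ℚ blockM = X ^ 3 + X ^ 2 - 2 * X - 1 := by
  refine (minpoly.eq_of_irreducible_of_monic
    irreducible_X_pow_three_add_X_sq_sub_two_mul_X_sub_one ?_ ?_).symm
  · rw [← charpoly_blockM]
    exact aeval_self_charpoly blockM
  · rw [← charpoly_blockM]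
    exact charpoly_monic blockM

lemma charpoly_blockX : blockX.charpoly = (X - 1) ^ 2 * (X - 7) := by
  rw [charpoly, det_fin_three]
  simp [blockX, map_ofNat]
  ring

lemma dotProduct_blockX_mulVec (w : Fin 3 → ℚ) :
    w ⬝ᵥ blockX *ᵥ w = (w 0 - w 1 + 2 * w 2) ^ 2 + w 0 ^ 2 + w 1 ^ 2 + w 2 ^ 2 := by
  simp [blockX, dotProduct, mulVec, Fin.sum_univ_three]
  ring

lemma dotProduct_blockX_mulVec_pos (w : Fin 3 → ℚ) (hw : w ≠ 0) :
    0 < w ⬝ᵥ blockX *ᵥ w := by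
  obtain ⟨i, hi⟩ := Function.ne_iff.mp hw
  calc 0 < w i ^ 2 := pow_two_pos_of_ne_zero hi
    _ ≤ ∑ j, w j ^ 2 := Finset.single_le_sum (fun j _ => sq_nonneg (w j)) (Finset.mem_univ i)
    _ ≤ w ⬝ᵥ blockX *ᵥ w := by
      rw [dotProduct_blockX_mulVec, Fin.sum_univ_three]
      linarith [sq_nonneg (w 0 - w 1 + 2 * w 2)]

end Blocks

/-- Let `M` and `X` be the explicit block-diagonal `6×6` rational
matrices below. Then (i) `X·M = Mᵀ·X`; (ii) the minimal polynomial of `M` over `ℚ` is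
`x³ + x² − 2x − 1`; (iii) the characteristic polynomial of `X` is `(x−1)⁴(x−7)²`; and
(iv) `X` is positive definite: `vᵀXv > 0` for every nonzero `v`. -/
theorem stmt_11 (M X : Matrix (Fin 6) (Fin 6) ℚ)
    (hM : M = Matrix.of
      ![![0, 0, 1, 0, 0, 0],
        ![1, 0, 2, 0, 0, 0],
        ![0, 1, -1, 0, 0, 0],
        ![0, 0, 0, 0, 0, 1],
        ![0, 0, 0, 1, 0, 2],
        ![0, 0, 0, 0, 1, -1]])
    (hX : X = Matrix.of
      ![![2, -1, 2, 0, 0, 0],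
        ![-1, 2, -2, 0, 0, 0],
        ![2, -2, 5, 0, 0, 0],
        ![0, 0, 0, 2, -1, 2],
        ![0, 0, 0, -1, 2, -2],
        ![0, 0, 0, 2, -2, 5]]) :
    X * M = Mᵀ * X ∧
      minpoly ℚ M =
        Polynomial.X ^ 3 + Polynomial.X ^ 2 - 2 * Polynomial.X - 1 ∧
      X.charpoly = (Polynomial.X - 1) ^ 4 * (Polynomial.X - 7) ^ 2 ∧
      ∀ v : Fin 6 → ℚ, v ≠ 0 → 0 < v ⬝ᵥ X.mulVec v := by
  set φ : Matrix (Fin 3) (Fin 3) ℚ →ₐ[ℚ] Matrix (Fin 6) (Fin 6) ℚ :=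
    doubleBlockAlgHom finSumFinEquiv
  have hMφ : M = φ blockM := by
    rw [hM]; ext i j; fin_cases i <;> fin_cases j <;> rfl
  have hXφ : X = φ blockX := by
    rw [hX]; ext i j; fin_cases i <;> fin_cases j <;> rfl
  subst hMφ hXφ
  refine ⟨?_, ?_, ?_, ?_⟩
  · rw [transpose_doubleBlockAlgHom, ← map_mul, ← map_mul, blockX_mul_blockM]
  · rw [minpoly.algHom_eq φ (doubleBlockAlgHom_injective _), minpoly_blockM]
  · rw [charpoly_doubleBlockAlgHom, charpoly_blockX]
    ring
  · exact fun v hv => dotProduct_doubleBlockAlgHom_mulVec_pos _ dotProduct_blockX_mulVec_pos hv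
end

section
/- Let B be the elliptic curve over ℚ defined by the Weierstrass equation y² = x³ + 5. Then the point R = (−1, 2) lies in B(ℚ) and has infinite order in the group B(ℚ); that is, R is not a torsion point. -/
/-!
On `y² = x³ + b` with `b` a `2`-adic integer, let `P = (x, y)` with `v₂(x) = v < 0`. Then
`2 v₂(y) = 3v`, the tangent slope `λ = 3x² / 2y` has `v₂(λ²) = v - 2 < v₂(2x)`, and so the
`x`-coordinate `λ² - 2x` of `2P` has valuation `v - 2`. Hence the points `2ⁿP` are pairwise
distinct and `P` has infinite order. For `R = (-1, 2)` on `y² = x³ + 5` one computes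
`2R = (41/16, …)`, whose `x`-coordinate has valuation `-4`.
-/

open WeierstrassCurve WeierstrassCurve.Affine

theorem padicValRat.add_eq_left_of_lt {p : ℕ} [Fact p.Prime] {q r : ℚ} (hq : q ≠ 0)
    (hval : padicValRat p q < padicValRat p r) : padicValRat p (q + r) = padicValRat p q := by
  rcases eq_or_ne r 0 with rfl | hr
  · rw [add_zero]
  refine padicValRat.add_eq_of_lt (fun hqr => hval.ne ?_) hq hr hval
  rw [eq_neg_of_add_eq_zero_right hqr, padicValRat.neg]

theorem ne_zero_of_padicValRat_ne_zero {p : ℕ} {q : ℚ} (h : padicValRat p q ≠ 0) : q ≠ 0 := by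
  rintro rfl
  exact h padicValRat.zero

theorem padicValRat_natCast_of_not_dvd {p n : ℕ} (h : ¬p ∣ n) : padicValRat p n = 0 := by
  rw [padicValRat.of_nat, padicValNat.eq_zero_of_not_dvd h, Nat.cast_zero]

theorem padicValRat_two_two : padicValRat 2 (2 : ℚ) = 1 := by
  exact_mod_cast padicValRat.self (p := 2) one_lt_two

def mordellCurve (b : ℚ) : WeierstrassCurve ℚ := ⟨0, 0, 0, 0, b⟩

namespace mordellCurve

variable {b x y : ℚ}

theorem equation_iff : (mordellCurve b).toAffine.Equation x y ↔ y ^ 2 = x ^ 3 + b := by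
  rw [Affine.equation_iff]
  simp [mordellCurve]

@[simp]
theorem negY : (mordellCurve b).toAffine.negY x y = -y := by
  simp [Affine.negY, mordellCurve]

theorem slope_self (hy : y ≠ 0) :
    (mordellCurve b).toAffine.slope x x y y = 3 * x ^ 2 / (2 * y) := by
  rw [slope_of_Y_ne rfl (by rw [negY]; intro h; exact hy (by linarith))]
  simp only [mordellCurve, mul_zero, zero_mul, add_zero, sub_zero, Affine.negY, sub_neg_eq_add]
  ring

@[simp]
theorem addX (L : ℚ) : (mordellCurve b).toAffine.addX x x L = L ^ 2 - 2 * x := by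
  simp only [Affine.addX, mordellCurve, zero_mul, add_zero, sub_zero]
  ring

section TwoAdic

variable (hb : 0 ≤ padicValRat 2 b) (h : (mordellCurve b).toAffine.Equation x y)
  (hx : padicValRat 2 x < 0)
include hb h hx

theorem two_mul_padicValRat_Y : 2 * padicValRat 2 y = 3 * padicValRat 2 x := by
  have hx3 : padicValRat 2 (x ^ 3) = 3 * padicValRat 2 x := by simp
  have hval := congrArg (padicValRat 2) ((equation_iff).1 h)
  rw [padicValRat.add_eq_left_of_lt (pow_ne_zero 3 (ne_zero_of_padicValRat_ne_zero hx.ne))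
    (by rw [hx3]; omega), hx3, padicValRat.pow] at hval
  push_cast at hval
  exact hval

theorem Y_ne_zero : y ≠ 0 :=
  ne_zero_of_padicValRat_ne_zero (p := 2) (by have := two_mul_padicValRat_Y hb h hx; omega)

theorem padicValRat_addX_slope_self :
    padicValRat 2 ((mordellCurve b).toAffine.addX x x ((mordellCurve b).toAffine.slope x x y y))
      = padicValRat 2 x - 2 := by
  have hx0 : x ≠ 0 := ne_zero_of_padicValRat_ne_zero hx.ne
  have hy0 := Y_ne_zero hb h hx
  have hy := two_mul_padicValRat_Y hb h hx
  have h3 : padicValRat 2 (3 : ℚ) = 0 := by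
    exact_mod_cast padicValRat_natCast_of_not_dvd (p := 2) (n := 3) (by norm_num)
  have hslope : padicValRat 2 ((3 * x ^ 2 / (2 * y)) ^ 2) = padicValRat 2 x - 2 := by
    rw [padicValRat.pow, padicValRat.div (by positivity) (by positivity),
      padicValRat.mul (by norm_num) (by positivity), padicValRat.mul two_ne_zero hy0,
      padicValRat.pow, padicValRat_two_two, h3]
    push_cast
    omega
  have h2x : padicValRat 2 (-(2 * x)) = padicValRat 2 x + 1 := by
    rw [padicValRat.neg, padicValRat.mul two_ne_zero hx0, padicValRat_two_two, add_comm]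
  rw [slope_self hy0, addX, sub_eq_add_neg,
    padicValRat.add_eq_left_of_lt (by positivity) (by omega), hslope]

end TwoAdic

end mordellCurve

noncomputable def WeierstrassCurve.Affine.Point.padicValX (p : ℕ) {W : WeierstrassCurve ℚ} :
    W.toAffine.Point → ℤ
  | 0 => 0
  | .some x _ _ => padicValRat p x

namespace mordellCurve

variable {b : ℚ} (hb : 0 ≤ padicValRat 2 b)
include hb

theorem padicValX_two_nsmul {P : (mordellCurve b).toAffine.Point} (hP : P.padicValX 2 < 0) :
    (2 • P).padicValX 2 = P.padicValX 2 - 2 := by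
  rcases P with _ | ⟨x, y, h⟩
  · exact absurd hP (lt_irrefl 0)
  have hy : y ≠ (mordellCurve b).toAffine.negY x y := by
    rw [negY]
    intro hy
    exact Y_ne_zero hb h.1 hP (by linarith)
  rw [two_nsmul, Point.add_self_of_Y_ne hy]
  exact padicValRat_addX_slope_self hb h.1 hP

theorem padicValX_two_pow_nsmul {P : (mordellCurve b).toAffine.Point} (hP : P.padicValX 2 < 0)
    (n : ℕ) : (2 ^ n • P).padicValX 2 = P.padicValX 2 - 2 * n := by
  induction n with
  | zero => simp
  | succ n ih =>
    rw [pow_succ, mul_nsmul, padicValX_two_nsmul hb (by omega), ih]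
    push_cast
    ring

theorem not_isOfFinAddOrder_of_padicValX_neg {P : (mordellCurve b).toAffine.Point}
    (hP : P.padicValX 2 < 0) : ¬IsOfFinAddOrder P := by
  have hinj : Function.Injective fun n : ℕ => 2 ^ n • P := fun m n hmn => by
    have hval := congrArg (Point.padicValX 2) hmn
    simp only [padicValX_two_pow_nsmul hb hP] at hval
    omega
  exact infinite_multiples.1 (Set.infinite_of_injective_forall_mem hinj fun n => ⟨2 ^ n, rfl⟩)

end mordellCurve

/-- Let `B` be the elliptic curve over `ℚ` defined by `y² = x³ + 5`.
Then `R = (−1, 2)` is a (nonsingular) rational point on `B` and it has infinite order in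
the group `B(ℚ)`, i.e. it is not a torsion point. -/
theorem stmt_12 (W : WeierstrassCurve ℚ) (hW : W = ⟨0, 0, 0, 0, 5⟩) :
    ∃ h : W.toAffine.Nonsingular (-1) 2,
      ¬ IsOfFinAddOrder (WeierstrassCurve.Affine.Point.some _ _ h) := by
  subst hW
  change ∃ h : (mordellCurve 5).toAffine.Nonsingular (-1) 2, ¬IsOfFinAddOrder (Point.some _ _ h)
  have hR : (mordellCurve 5).toAffine.Nonsingular (-1) 2 := by
    rw [nonsingular_iff, mordellCurve.equation_iff]
    norm_num [mordellCurve]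
  have hy : (2 : ℚ) ≠ (mordellCurve 5).toAffine.negY (-1) 2 := by
    rw [mordellCurve.negY]
    norm_num
  have h41 : padicValRat 2 (41 : ℚ) = 0 := by
    exact_mod_cast padicValRat_natCast_of_not_dvd (p := 2) (n := 41) (by norm_num)
  have h2R : (2 • Point.some _ _ hR).padicValX 2 = -4 := by
    rw [two_nsmul, Point.add_self_of_Y_ne hy]
    change padicValRat 2 (_ : ℚ) = -4
    rw [mordellCurve.slope_self two_ne_zero, mordellCurve.addX,
      show (3 * (-1) ^ 2 / (2 * 2)) ^ 2 - 2 * (-1) = (41 / 2 ^ 4 : ℚ) by norm_num,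
      padicValRat.div (by norm_num) (by norm_num), padicValRat.pow, padicValRat_two_two, h41]
    norm_num
  have h5 : 0 ≤ padicValRat 2 (5 : ℚ) := by exact_mod_cast zero_le_padicValRat_of_nat 5
  exact ⟨hR, fun hR_fin =>
    mordellCurve.not_isOfFinAddOrder_of_padicValX_neg h5 (by omega) (hR_fin.nsmul (n := 2))⟩
end
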